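/- arXiv:2004.02050 — 2 statements merged into one kernel-verified Lean document; each statement's English description precedes it below -/
import Mathlib

section
/- Let $b > 0$, $p = e^b$, $q = p/(p-1)$, $C_b = p^{1-q}/q$, and $a \ge 0$. For any $k$ with $0 \le k < 1/(4a)$ (any $k \ge 0$ if $a = 0$), the functions $\alpha(s) = \frac{kb}{e^{bs} - 4ak}$ and $\beta(s) = \beta_0 e^{-bs}$ satisfy $\alpha'(s) + 4a\alpha(s)^2 + b\alpha(s) = 0$ and $\beta'(s) + b\beta(s) = 0$ on $[0,1]$, and consequently for a $1$-Lipschitz bounded $f$ with $|\nabla f| \le 1$, the function $\varphi_s = \exp(\alpha(s) f^2 + \beta(s))$ satisfies $\partial_s \varphi_s + a \varphi_s |\nabla \ln \varphi_s|^2 + b \varphi_s \ln \varphi_s \le 0$. -/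
open Filter

/-- The local Lipschitz slope `|∇f|(x) = limsup_{y → x} |f(x) - f(y)|/d(x,y)`. -/
noncomputable def lipSlope {X : Type*} [MetricSpace X] (f : X → ℝ) (x : X) : ℝ :=
  Filter.limsup (fun y => |f x - f y| / dist x y) (nhdsWithin x {x}ᶜ)

/-!
`α` solves the Riccati equation `α' = -(4aα² + bα)` and `β` the linear one `β' = -bβ`; the
denominator of `α` stays positive on `[0,1]` because `e^{bs} ≥ 1 > 4ak`. Since
`ln φ_s = α f² + β` and `|f(x)² - f(y)²| ≤ d(x,y)(2|f(x)| + d(x,y))` for `1`-Lipschitz `f`,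
the slope of `ln φ_s` at `x` is at most `2|α||f(x)|`. Substituting the two equations, the
`b`-terms cancel and what remains is `a φ_s (|∇ ln φ_s|² - 4α²f²) ≤ 0`.
-/

open Topology NNReal

section Slope

variable {X : Type*} [MetricSpace X]

theorem lipSlope_nonneg (g : X → ℝ) (x : X) : 0 ≤ lipSlope g x := by
  rcases (𝓝[≠] x).eq_or_neBot with hbot | hne
  -- at an isolated point the limsup is `sInf univ`, which is `0` in `ℝ`
  · simp [lipSlope, hbot, limsup_eq]
  · refine Real.sInf_nonneg fun a ha => ?_
    rw [Set.mem_ofPred_eq, eventually_map] at ha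
    obtain ⟨y, hy⟩ := ha.exists
    exact (div_nonneg (abs_nonneg _) dist_nonneg).trans hy

theorem lipSlope_le_of_abs_sub_le {g : X → ℝ} {x : X} {c : ℝ} (K : ℝ) (hc : 0 ≤ c)
    (h : ∀ y, |g x - g y| ≤ (c + K * dist x y) * dist x y) : lipSlope g x ≤ c := by
  rcases (𝓝[≠] x).eq_or_neBot with hbot | hne
  · simpa [lipSlope, hbot, limsup_eq] using hc
  have hv : Tendsto (fun y => c + K * dist x y) (𝓝[≠] x) (𝓝 c) := by
    refine tendsto_nhdsWithin_of_tendsto_nhds ?_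
    exact (((continuous_const (y := x)).dist continuous_id).const_mul K).const_add c
      |>.tendsto' x c (by simp)
  have hle : ∀ᶠ y in 𝓝[≠] x, |g x - g y| / dist x y ≤ c + K * dist x y := by
    filter_upwards [self_mem_nhdsWithin] with y hy
    rw [div_le_iff₀ (dist_pos.2 (Ne.symm hy))]
    exact h y
  calc lipSlope g x ≤ limsup (fun y => c + K * dist x y) (𝓝[≠] x) :=
        limsup_le_limsup hle
          (isCoboundedUnder_le_of_le _ fun _ => div_nonneg (abs_nonneg _) dist_nonneg)
          hv.isBoundedUnder_le
    _ = c := hv.limsup_eq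

theorem lipSlope_mul_sq_add_le {f : X → ℝ} {L : ℝ≥0} (hf : LipschitzWith L f) (c d : ℝ)
    (x : X) : lipSlope (fun z => c * f z ^ 2 + d) x ≤ 2 * |c| * L * |f x| := by
  refine lipSlope_le_of_abs_sub_le (|c| * L ^ 2) (by positivity) fun y => ?_
  have hdiff : |f x - f y| ≤ L * dist x y := by
    simpa [Real.dist_eq] using hf.dist_le_mul x y
  have hsum : |f x + f y| ≤ 2 * |f x| + L * dist x y := by
    have := abs_sub_abs_le_abs_sub (f y) (f x)
    rw [abs_sub_comm] at this
    linarith [abs_add_le (f x) (f y)]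
  calc |(c * f x ^ 2 + d) - (c * f y ^ 2 + d)| = |c| * (|f x - f y| * |f x + f y|) := by
        rw [← abs_mul, ← abs_mul]; ring_nf
    _ ≤ |c| * (L * dist x y * (2 * |f x| + L * dist x y)) := by gcongr
    _ = (2 * |c| * L * |f x| + |c| * L ^ 2 * dist x y) * dist x y := by ring

end Slope

theorem hasDerivAt_riccati_solution {a b k s : ℝ} (hs : Real.exp (b * s) - 4 * a * k ≠ 0) :
    HasDerivAt (fun s => k * b / (Real.exp (b * s) - 4 * a * k))
      (-(4 * a * (k * b / (Real.exp (b * s) - 4 * a * k)) ^ 2 +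
        b * (k * b / (Real.exp (b * s) - 4 * a * k)))) s := by
  have hden : HasDerivAt (fun s => Real.exp (b * s) - 4 * a * k) (Real.exp (b * s) * b) s :=
    ((hasDerivAt_id s).const_mul b |>.exp.sub_const _).congr_deriv (by simp)
  exact ((hasDerivAt_const s (k * b)).div hden hs).congr_deriv (by field_simp; ring)

theorem hasDerivAt_exp_decay (β₀ b s : ℝ) :
    HasDerivAt (fun s => β₀ * Real.exp (-b * s)) (-(b * (β₀ * Real.exp (-b * s)))) s :=
  (((hasDerivAt_id s).const_mul (-b)).exp.const_mul β₀).congr_deriv (by simp; ring)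

theorem stmt_16_general {X : Type*} [MetricSpace X]
    (a b k β₀ : ℝ) (ha : 0 ≤ a) (hb : 0 < b) (hak : 4 * a * k < 1)
    (α β : ℝ → ℝ)
    (hα : α = fun s => k * b / (Real.exp (b * s) - 4 * a * k))
    (hβ : β = fun s => β₀ * Real.exp (-b * s))
    (f : X → ℝ) (hfLip : LipschitzWith 1 f)
    (φ : ℝ → X → ℝ)
    (hφ : φ = fun s x => Real.exp (α s * f x ^ 2 + β s)) :
    (∀ s ∈ Set.Icc (0:ℝ) 1, deriv α s + 4 * a * α s ^ 2 + b * α s = 0) ∧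
    (∀ s ∈ Set.Icc (0:ℝ) 1, deriv β s + b * β s = 0) ∧
    (∀ s ∈ Set.Icc (0:ℝ) 1, ∀ x : X,
      deriv (fun u => φ u x) s +
          a * φ s x * (lipSlope (fun z => Real.log (φ s z)) x) ^ 2 +
          b * φ s x * Real.log (φ s x) ≤ 0) := by
  have hα' : ∀ s ∈ Set.Icc (0:ℝ) 1, HasDerivAt α (-(4 * a * α s ^ 2 + b * α s)) s := by
    intro s hs
    have : 1 ≤ Real.exp (b * s) := Real.one_le_exp (mul_nonneg hb.le hs.1)
    rw [hα]
    exact hasDerivAt_riccati_solution (by linarith)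
  have hβ' (s : ℝ) : HasDerivAt β (-(b * β s)) s := hβ ▸ hasDerivAt_exp_decay β₀ b s
  refine ⟨fun s hs => by rw [(hα' s hs).deriv]; ring,
    fun s _ => by rw [(hβ' s).deriv]; ring, fun s hs x => ?_⟩
  subst hφ
  simp only [Real.log_exp]
  have hφ' : HasDerivAt (fun u => Real.exp (α u * f x ^ 2 + β u))
      (Real.exp (α s * f x ^ 2 + β s) * (-(4 * a * α s ^ 2 + b * α s) * f x ^ 2 + -(b * β s))) s :=
    (((hα' s hs).mul_const (f x ^ 2)).add (hβ' s)).exp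
  rw [hφ'.deriv]
  set S := lipSlope (fun z => α s * f z ^ 2 + β s) x
  have hS : S ^ 2 ≤ 4 * α s ^ 2 * f x ^ 2 := by
    have hSle := lipSlope_mul_sq_add_le hfLip (α s) (β s) x
    rw [NNReal.coe_one, mul_one] at hSle
    calc S ^ 2 ≤ (2 * |α s| * |f x|) ^ 2 := pow_le_pow_left₀ (lipSlope_nonneg _ x) hSle 2
      _ = 4 * α s ^ 2 * f x ^ 2 := by rw [mul_pow, mul_pow, sq_abs, sq_abs]; ring
  have hE := Real.exp_pos (α s * f x ^ 2 + β s)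
  nlinarith [mul_le_mul_of_nonneg_left hS (mul_nonneg ha hE.le)]

/-- Lemma 5.4, explicit subsolution: with `α(s) = kb/(e^{bs} - 4ak)`,
`β(s) = β₀ e^{-bs}`, one has `α' + 4aα² + bα = 0`, `β' + bβ = 0`, and for a
bounded `1`-Lipschitz `f` (with `|∇f| ≤ 1`) the function
`φ_s = exp(α(s) f² + β(s))` satisfies
`∂_s φ_s + a φ_s |∇ ln φ_s|² + b φ_s ln φ_s ≤ 0`. -/
theorem stmt_16 {X : Type*} [MetricSpace X]
    (a b k β₀ : ℝ) (ha : 0 ≤ a) (hb : 0 < b) (hk : 0 ≤ k) (hak : 4 * a * k < 1)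
    (α β : ℝ → ℝ)
    (hα : α = fun s => k * b / (Real.exp (b * s) - 4 * a * k))
    (hβ : β = fun s => β₀ * Real.exp (-b * s))
    (f : X → ℝ) (hfLip : LipschitzWith 1 f) (hfbd : ∃ M, ∀ x, |f x| ≤ M)
    (hfslope : ∀ x, lipSlope f x ≤ 1)
    (φ : ℝ → X → ℝ)
    (hφ : φ = fun s x => Real.exp (α s * f x ^ 2 + β s)) :
    (∀ s ∈ Set.Icc (0:ℝ) 1, deriv α s + 4 * a * α s ^ 2 + b * α s = 0) ∧
    (∀ s ∈ Set.Icc (0:ℝ) 1, deriv β s + b * β s = 0) ∧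
    (∀ s ∈ Set.Icc (0:ℝ) 1, ∀ x : X,
      deriv (fun u => φ u x) s +
          a * φ s x * (lipSlope (fun z => Real.log (φ s z)) x) ^ 2 +
          b * φ s x * Real.log (φ s x) ≤ 0) :=
  stmt_16_general a b k β₀ ha hb hak α β hα hβ f hfLip φ hφ
end

section
/- Let $X$ be a geodesic metric space with strong upper gradient $|\nabla \cdot|$, $a, b > 0$, $p = e^b$, $q = p/(p-1)$, $C_b = p^{1-q}/q$. Let $\varphi \in C^1([0,1], \mathrm{Lip}_b(X))$ be positive, bounded away from 0, and satisfy $\partial_s\varphi_s + a\varphi_s|\nabla\ln\varphi_s|^2 + b\varphi_s\ln\varphi_s \le 0$. Then for any $x_0, x_1 \in X$, $\varphi_1(x_1) - \varphi_0(x_0) \le C_b \exp\left(\frac{d(x_0,x_1)^2}{4ab}\right)$. -/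
/-!
Along a constant-speed geodesic `γ` from `x₀` to `x₁`, the function `y s = φ_s (γ s)` satisfies,
in the sense of upper right Dini derivatives, `(log y)' ≤ ∂ₛφ/φ + d · |∇ log φ| ≤ d²/(4a) - b log y`
(with `d = d(x₀, x₁)`; the second step is the differential inequality and completing the square).
Comparison with the linear ODE gives `y 1 ≤ exp (d²/(4abq)) · (y 0)^(1/p)`, since `e^{-b} = 1/p`,
and Young's inequality `x^(1/p) z - x ≤ C_b z^q` with `z = exp (d²/(4abq))` concludes.
-/

open Filter

open Set Real Topology
open scoped NNReal

theorem Real.HolderConjugate.rpow_inv_mul_sub_le {p q : ℝ} (hpq : p.HolderConjugate q)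
    {x z : ℝ} (hx : 0 ≤ x) (hz : 0 ≤ z) : x ^ p⁻¹ * z - x ≤ p ^ (1 - q) / q * z ^ q := by
  have hp := hpq.pos
  -- Young's inequality for the factorisation `(x p)^(1/p) · (z p^(-1/p))`, using `q / p = q - 1`.
  have hyoung := young_inequality_of_nonneg
    (mul_nonneg (rpow_nonneg hx p⁻¹) (rpow_nonneg hp.le p⁻¹))
    (mul_nonneg hz (rpow_nonneg hp.le (-p⁻¹))) hpq
  have hA : (x ^ p⁻¹ * p ^ p⁻¹) ^ p = x * p := by
    rw [mul_rpow (rpow_nonneg hx _) (rpow_nonneg hp.le _), ← rpow_mul hx, ← rpow_mul hp.le,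
      inv_mul_cancel₀ hp.ne', rpow_one, rpow_one]
  have hB : (z * p ^ (-p⁻¹)) ^ q = p ^ (1 - q) * z ^ q := by
    have : -p⁻¹ * q = 1 - q := by
      linear_combination (-q) * hpq.inv_add_inv_eq_one + mul_inv_cancel₀ hpq.symm.ne_zero
    rw [mul_rpow hz (rpow_nonneg hp.le _), ← rpow_mul hp.le, this, mul_comm]
  have hAB : x ^ p⁻¹ * p ^ p⁻¹ * (z * p ^ (-p⁻¹)) = x ^ p⁻¹ * z := by
    rw [mul_mul_mul_comm, ← rpow_add hp, add_neg_cancel, rpow_zero, mul_one]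
  rw [hAB, hA, hB, mul_div_cancel_right₀ _ hp.ne', mul_div_right_comm] at hyoung
  linarith

theorem Real.HolderConjugate.sub_le_of_log_le {p q c y₀ y₁ : ℝ} (hpq : p.HolderConjugate q)
    (hy₀ : 0 < y₀) (hy₁ : 0 < y₁) (h : log y₁ ≤ c * q⁻¹ + log y₀ * p⁻¹) :
    y₁ - y₀ ≤ p ^ (1 - q) / q * exp c := by
  have hy₁_le : y₁ ≤ y₀ ^ p⁻¹ * exp (c * q⁻¹) := by
    rw [rpow_def_of_pos hy₀, ← exp_add, ← exp_log hy₁]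
    exact exp_le_exp.2 (by linarith)
  have hzq : exp (c * q⁻¹) ^ q = exp c := by
    rw [← exp_mul, inv_mul_cancel_right₀ hpq.symm.ne_zero]
  calc y₁ - y₀ ≤ y₀ ^ p⁻¹ * exp (c * q⁻¹) - y₀ := by linarith
    _ ≤ p ^ (1 - q) / q * exp c := hzq ▸ hpq.rpow_inv_mul_sub_le hy₀.le (exp_pos _).le

theorem image_le_of_liminf_slope_right_lt_sub_mul {u : ℝ → ℝ} {r b T : ℝ} (hb : 0 < b)
    (hu : ContinuousOn u (Icc 0 T))
    (hslope : ∀ s ∈ Ico 0 T, ∀ ρ, r - b * u s < ρ → ∃ᶠ z in 𝓝[>] s, slope u s z < ρ)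
    {t : ℝ} (ht : t ∈ Icc 0 T) : u t ≤ r / b + (u 0 - r / b) * exp (-(b * t)) := by
  set B : ℝ → ℝ := fun t => r / b + (u 0 - r / b) * exp (-(b * t))
  have hB : ∀ t, HasDerivAt B (r - b * B t) t := fun t => by
    have h := (((hasDerivAt_id t).const_mul b).neg.exp.const_mul (u 0 - r / b)).const_add (r / b)
    refine h.congr_deriv ?_
    simp only [B, id, Pi.neg_apply]
    field_simp
    ring
  -- Compare with the strict supersolutions `B + η (t + 1)` and let `η → 0`.
  have hη : ∀ η > 0, u t ≤ B t + η * (t + 1) := fun η hη =>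
    image_le_of_liminf_slope_right_lt_deriv_boundary' hu hslope
      (by simpa [B] using hη.le) (by fun_prop)
      (fun s _ => ((hB s).add (((hasDerivAt_id s).add_const 1).const_mul η)).hasDerivWithinAt)
      (fun s hs hus => by
        simp only [Pi.add_apply, id] at hus ⊢
        rw [hus]
        linarith [mul_pos hb hη, mul_nonneg (mul_pos hb hη).le hs.1]) ht
  refine le_of_forall_pos_le_add fun η hη' => ?_
  have ht1 : 0 < t + 1 := by linarith [ht.1]
  simpa [div_mul_cancel₀ _ ht1.ne'] using hη (η / (t + 1)) (div_pos hη' ht1)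

theorem mul_sub_mul_sq_le {a : ℝ} (ha : 0 < a) (d S : ℝ) :
    d * S - a * S ^ 2 ≤ d ^ 2 / (4 * a) := by
  rw [le_div_iff₀ (by positivity)]
  nlinarith [sq_nonneg (2 * a * S - d)]

section Metric

variable {X : Type*} [MetricSpace X]

theorem LipschitzWith.eventually_sub_le_lipSlope_add_mul_dist {f : X → ℝ} {K : ℝ≥0}
    (hf : LipschitzWith K f) (x : X) {δ : ℝ} (hδ : 0 < δ) :
    ∀ᶠ y in 𝓝 x, f y - f x ≤ (lipSlope f x + δ) * dist x y := by
  have hbdd : IsBoundedUnder (· ≤ ·) (𝓝[≠] x) fun y => |f x - f y| / dist x y :=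
    isBoundedUnder_of ⟨K, fun y => div_le_of_le_mul₀ dist_nonneg K.coe_nonneg <| by
      simpa only [Real.dist_eq] using hf.dist_le_mul x y⟩
  have hlt := eventually_lt_of_limsup_lt (lt_add_of_pos_right (lipSlope f x) hδ) hbdd
  filter_upwards [eventually_nhdsWithin_iff.1 hlt] with y hy
  rcases eq_or_ne y x with rfl | hne
  · simp
  have := (div_lt_iff₀ (dist_pos.2 hne.symm)).1 (hy hne)
  linarith [neg_abs_le (f x - f y)]

theorem LipschitzWith.log_of_le {f : X → ℝ} {K : ℝ≥0} {ε : ℝ} (hf : LipschitzWith K f)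
    (hε : 0 < ε) (hfε : ∀ x, ε ≤ f x) :
    LipschitzWith (K / ε.toNNReal) fun x => log (f x) := by
  have hlog : LipschitzOnWith (ε.toNNReal)⁻¹ log (Ici ε) :=
    (convex_Ici ε).lipschitzOnWith_of_nnnorm_deriv_le
      (fun x hx => differentiableAt_log (hε.trans_le hx).ne') fun x hx => by
        rw [deriv_log, nnnorm_inv, ← NNReal.coe_le_coe, NNReal.coe_inv, NNReal.coe_inv,
          coe_nnnorm, Real.norm_of_nonneg (hε.trans_le hx).le, Real.coe_toNNReal _ hε.le]
        exact inv_anti₀ hε hx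
  rw [div_eq_inv_mul, ← lipschitzOnWith_univ]
  exact hlog.comp hf.lipschitzOnWith fun x _ => hfε x

theorem continuousOn_of_dist_eq_abs_sub_mul {γ : ℝ → X} {I : Set ℝ} {d : ℝ}
    (hγ : ∀ s ∈ I, ∀ t ∈ I, dist (γ s) (γ t) = |s - t| * d) : ContinuousOn γ I :=
  (LipschitzOnWith.of_dist_le_mul (K := d.toNNReal) fun s hs t ht => by
    rw [hγ s hs t ht, Real.dist_eq, Real.coe_toNNReal', mul_comm]
    exact mul_le_mul_of_nonneg_right (le_max_left d 0) (abs_nonneg _)).continuousOn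

theorem eventually_sub_le_of_hasDerivAt {F F' : ℝ → X → ℝ} {γ : ℝ → X} {s T δ : ℝ}
    (hsT : s < T) (hF : ∀ x, ∀ t ∈ Icc s T, HasDerivAt (fun u => F u x) (F' t x) t)
    (hF' : ContinuousWithinAt (fun p : ℝ × X => F' p.1 p.2) (Icc s T ×ˢ univ) (s, γ s))
    (hγ : ContinuousWithinAt γ (Ioi s) s) (hδ : 0 < δ) :
    ∀ᶠ z in 𝓝[>] s, F z (γ z) - F s (γ z) ≤ (F' s (γ s) + δ) * (z - s) := by
  have hnear : ∀ᶠ p in 𝓝[≥] s ×ˢ 𝓝 (γ s), F' p.1 p.2 < F' s (γ s) + δ := by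
    rw [← nhdsWithin_Icc_eq_nhdsGE hsT, ← nhdsWithin_univ (γ s), ← nhdsWithin_prod_eq]
    exact hF' (gt_mem_nhds (lt_add_of_pos_right _ hδ))
  obtain ⟨P, hP, Q, hQ, hPQ⟩ := eventually_prod_iff.1 hnear
  obtain ⟨η, hη, hηP⟩ := mem_nhdsGE_iff_exists_Ico_subset.1 hP
  filter_upwards [Ioo_mem_nhdsGT (lt_min hη hsT), hγ hQ] with z hz hzQ
  have hsub : Icc s z ⊆ Icc s T := Icc_subset_Icc_right (hz.2.le.trans (min_le_right _ _))
  refine (convex_Icc s z).image_sub_le_mul_sub_of_deriv_le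
    (fun t ht => (hF _ t (hsub ht)).continuousAt.continuousWithinAt)
    (fun t ht => (hF _ t (hsub (interior_subset ht))).differentiableAt.differentiableWithinAt)
    (fun t ht => ?_) s (left_mem_Icc.2 hz.1.le) z (right_mem_Icc.2 hz.1.le) hz.1.le
  rw [interior_Icc] at ht
  rw [(hF _ t (hsub (Ioo_subset_Icc_self ht))).deriv]
  exact (hPQ (hηP ⟨ht.1.le, ht.2.trans (hz.2.trans_le (min_le_left _ _))⟩) hzQ).le

theorem continuousOn_uncurry_of_lipschitzWith {φ : ℝ → X → ℝ} {I : Set ℝ} {K : ℝ≥0}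
    (hK : ∀ t ∈ I, LipschitzWith K (φ t)) (hφ : ∀ x, ContinuousOn (fun t => φ t x) I) :
    ContinuousOn (fun p : ℝ × X => φ p.1 p.2) (I ×ˢ univ) :=
  continuousOn_prod_of_continuousOn_lipschitzOnWith' _ K (fun t ht => (hK t ht).lipschitzOnWith)
    fun x _ => hφ x

theorem eventually_slope_log_comp_lt {φ φ' : ℝ → X → ℝ} {γ : ℝ → X} {K : ℝ≥0} {ε d s ρ : ℝ}
    (hφ : ∀ x, ∀ t ∈ Icc (0 : ℝ) 1, HasDerivAt (fun u => φ u x) (φ' t x) t)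
    (hK : ∀ t ∈ Icc (0 : ℝ) 1, LipschitzWith K (φ t))
    (hε : 0 < ε) (hφε : ∀ t ∈ Icc (0 : ℝ) 1, ∀ x, ε ≤ φ t x)
    (hφ' : Continuous fun p : ℝ × X => φ' p.1 p.2)
    (hγ : ∀ s ∈ Icc (0 : ℝ) 1, ∀ t ∈ Icc (0 : ℝ) 1, dist (γ s) (γ t) = |s - t| * d)
    (hs : s ∈ Ico (0 : ℝ) 1)
    (hρ : φ' s (γ s) / φ s (γ s) + d * lipSlope (fun x => log (φ s x)) (γ s) < ρ) :
    ∀ᶠ z in 𝓝[>] s, slope (fun t => log (φ t (γ t))) s z < ρ := by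
  set L := φ' s (γ s) / φ s (γ s)
  set S := lipSlope (fun x => log (φ s x)) (γ s)
  have hsI : s ∈ Icc (0 : ℝ) 1 := Ico_subset_Icc_self hs
  have hd : 0 ≤ d := by
    simpa using (dist_nonneg.trans_eq (hγ 1 (right_mem_Icc.2 zero_le_one) 0
      (left_mem_Icc.2 zero_le_one)))
  set δ := (ρ - (L + d * S)) / (2 * (1 + d))
  have hδ : 0 < δ := div_pos (by linarith) (by positivity)
  have hρδ : L + δ + (S + δ) * d < ρ := by
    have : δ * (1 + d) = (ρ - (L + d * S)) / 2 := by simp only [δ]; field_simp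
    linarith
  have hφ0 : ∀ t ∈ Icc (0 : ℝ) 1, ∀ x, φ t x ≠ 0 := fun t ht x => (hε.trans_le (hφε t ht x)).ne'
  have hγs : Tendsto γ (𝓝[>] s) (𝓝 (γ s)) :=
    ((continuousOn_of_dist_eq_abs_sub_mul hγ) s hsI).mono_of_mem_nhdsWithin
      (Icc_mem_nhdsGT_of_mem hs)
  have hφc : ContinuousOn (fun p : ℝ × X => φ p.1 p.2) (Icc 0 1 ×ˢ univ) :=
    continuousOn_uncurry_of_lipschitzWith hK fun x t ht =>
      (hφ x t ht).continuousAt.continuousWithinAt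
  -- Split the increment through `log (φ s (γ z))`: mean value theorem in time at the fixed point
  -- `γ z`, slope of `log (φ s)` in space.
  have htime := eventually_sub_le_of_hasDerivAt (F := fun t x => log (φ t x))
    (F' := fun t x => φ' t x / φ t x) (γ := γ) hs.2
    (fun x t ht => (hφ x t (Icc_subset_Icc_left hs.1 ht)).log
      (hφ0 t (Icc_subset_Icc_left hs.1 ht) x))
    ((hφ'.continuousWithinAt.div (hφc _ ⟨hsI, trivial⟩) (hφ0 s hsI _)).mono
      (prod_mono (Icc_subset_Icc_left hs.1) subset_rfl)) hγs hδ
  have hspace := hγs.eventually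
    (((hK s hsI).log_of_le hε (hφε s hsI)).eventually_sub_le_lipSlope_add_mul_dist (γ s) hδ)
  filter_upwards [htime, hspace, Ioo_mem_nhdsGT hs.2] with z htz hsz hz
  have hzI : z ∈ Icc (0 : ℝ) 1 := ⟨hs.1.trans hz.1.le, hz.2.le⟩
  rw [hγ s hsI z hzI, abs_sub_comm, abs_of_pos (sub_pos.2 hz.1)] at hsz
  rw [slope_def_field, div_lt_iff₀ (sub_pos.2 hz.1)]
  have := mul_lt_mul_of_pos_left hρδ (sub_pos.2 hz.1)
  linarith

end Metric

theorem stmt_18_general {X : Type*} [MetricSpace X]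
    (hgeo : ∀ x y : X, ∃ γ : ℝ → X, γ 0 = x ∧ γ 1 = y ∧
      ∀ s ∈ Set.Icc (0:ℝ) 1, ∀ t ∈ Set.Icc (0:ℝ) 1,
        dist (γ s) (γ t) = |s - t| * dist x y)
    (a b p q Cb : ℝ) (ha : 0 < a) (hb : 0 < b)
    (hp : p = Real.exp b) (hq : q = p / (p - 1)) (hCb : Cb = p ^ (1 - q) / q)
    (φ φ' : ℝ → X → ℝ)
    (hC1 : ∀ x : X, ∀ s ∈ Set.Icc (0:ℝ) 1, HasDerivAt (fun u => φ u x) (φ' s x) s)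
    (hLip : ∃ K, ∀ s ∈ Set.Icc (0:ℝ) 1, LipschitzWith K (φ s))
    (hlb : ∃ ε > 0, ∀ s ∈ Set.Icc (0:ℝ) 1, ∀ x : X, ε ≤ φ s x)
    (hcont : Continuous fun pr : ℝ × X => φ' pr.1 pr.2)
    (hsub : ∀ s ∈ Set.Icc (0:ℝ) 1, ∀ x : X,
      φ' s x + a * φ s x * (lipSlope (fun z => Real.log (φ s z)) x) ^ 2 +
        b * φ s x * Real.log (φ s x) ≤ 0) :
    ∀ x₀ x₁ : X, φ 1 x₁ - φ 0 x₀ ≤ Cb * Real.exp (dist x₀ x₁ ^ 2 / (4 * a * b)) := by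
  intro x₀ x₁
  obtain ⟨K, hK⟩ := hLip
  obtain ⟨ε, hε, hφε⟩ := hlb
  obtain ⟨γ, hγ0, hγ1, hγ⟩ := hgeo x₀ x₁
  set r := dist x₀ x₁ ^ 2 / (4 * a)
  have hpos : ∀ t ∈ Icc (0 : ℝ) 1, 0 < φ t (γ t) := fun t ht => hε.trans_le (hφε t ht _)
  have hu : ContinuousOn (fun t => log (φ t (γ t))) (Icc 0 1) :=
    ((continuousOn_uncurry_of_lipschitzWith hK fun x t ht =>
      (hC1 x t ht).continuousAt.continuousWithinAt).comp
        (continuousOn_id.prodMk (continuousOn_of_dist_eq_abs_sub_mul hγ)) fun t ht =>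
          ⟨ht, trivial⟩).log fun t ht => (hpos t ht).ne'
  -- Divide the differential inequality by `φ` and complete the square: `d S - a S² ≤ d² / 4a`.
  have hdini : ∀ s ∈ Icc (0 : ℝ) 1, φ' s (γ s) / φ s (γ s) +
      dist x₀ x₁ * lipSlope (fun x => log (φ s x)) (γ s) ≤ r - b * log (φ s (γ s)) := by
    intro s hs
    have hdiv : φ' s (γ s) / φ s (γ s) ≤ -(a * lipSlope (fun x => log (φ s x)) (γ s) ^ 2) -
        b * log (φ s (γ s)) := by
      rw [div_le_iff₀ (hpos s hs)]
      linarith [hsub s hs (γ s)]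
    linarith [mul_sub_mul_sq_le ha (dist x₀ x₁) (lipSlope (fun x => log (φ s x)) (γ s))]
  have hgron := image_le_of_liminf_slope_right_lt_sub_mul hb hu
    (fun s hs ρ hρ => (eventually_slope_log_comp_lt hC1 hK hε hφε hcont hγ hs
      ((hdini s (Ico_subset_Icc_self hs)).trans_lt hρ)).frequently) (right_mem_Icc.2 zero_le_one)
  have hpq : p.HolderConjugate q :=
    (holderConjugate_iff_eq_conjExponent (hp ▸ one_lt_exp_iff.2 hb)).2 hq
  rw [mul_one, exp_neg, ← hp, hγ0, hγ1] at hgron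
  rw [hCb, ← div_div]
  refine hpq.sub_le_of_log_le (hγ0 ▸ hpos 0 (left_mem_Icc.2 zero_le_one))
    (hγ1 ▸ hpos 1 (right_mem_Icc.2 zero_le_one)) ?_
  rw [← hpq.one_sub_inv]
  linarith

/-- Upper bound in Proposition 5.13: in a geodesic space, for a positive `C¹`
family of bounded Lipschitz functions `φ` bounded away from `0` satisfying
`∂_s φ_s + a φ_s |∇ ln φ_s|² + b φ_s ln φ_s ≤ 0`, one has
`φ₁(x₁) - φ₀(x₀) ≤ C_b exp(d(x₀,x₁)²/(4ab))`. -/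
theorem stmt_18 {X : Type*} [MetricSpace X]
    (hgeo : ∀ x y : X, ∃ γ : ℝ → X, γ 0 = x ∧ γ 1 = y ∧
      ∀ s ∈ Set.Icc (0:ℝ) 1, ∀ t ∈ Set.Icc (0:ℝ) 1,
        dist (γ s) (γ t) = |s - t| * dist x y)
    (a b p q Cb : ℝ) (ha : 0 < a) (hb : 0 < b)
    (hp : p = Real.exp b) (hq : q = p / (p - 1)) (hCb : Cb = p ^ (1 - q) / q)
    (φ φ' : ℝ → X → ℝ)
    (hC1 : ∀ x : X, ∀ s ∈ Set.Icc (0:ℝ) 1, HasDerivAt (fun u => φ u x) (φ' s x) s)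
    (hLip : ∃ K, ∀ s ∈ Set.Icc (0:ℝ) 1, LipschitzWith K (φ s))
    (hbd : ∃ M, ∀ s ∈ Set.Icc (0:ℝ) 1, ∀ x : X, |φ s x| ≤ M)
    (hlb : ∃ ε > 0, ∀ s ∈ Set.Icc (0:ℝ) 1, ∀ x : X, ε ≤ φ s x)
    (hcont : Continuous fun pr : ℝ × X => φ' pr.1 pr.2)
    (hsub : ∀ s ∈ Set.Icc (0:ℝ) 1, ∀ x : X,
      φ' s x + a * φ s x * (lipSlope (fun z => Real.log (φ s z)) x) ^ 2 +
        b * φ s x * Real.log (φ s x) ≤ 0) :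
    ∀ x₀ x₁ : X, φ 1 x₁ - φ 0 x₀ ≤ Cb * Real.exp (dist x₀ x₁ ^ 2 / (4 * a * b)) :=
  stmt_18_general hgeo a b p q Cb ha hb hp hq hCb φ φ' hC1 hLip hlb hcont hsub
end
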